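/- arXiv:math/0405026 — 3 statements merged into one kernel-verified Lean document; each statement's English description precedes it below -/
import Mathlib

section
/- For every a ∈ ℝ^12, all α, β ∈ ℝ, and every s ∈ {1, 2, 3, 4}, the following translation formula holds identically in (x, y): μ_s(r_{α,β}(a), x, y) = μ_s(a, x, y) + Σ_{k=0}^{s−1} binom(4−k, s−k) · ξ^{s−k} · μ_k(a, x, y), where ξ = β·x − α·y and binom denotes the binomial coefficient. -/
open MvPolynomial Finset

noncomputable section

namespace QSinf

/-!  Coefficient conventions: for `a : Fin 12 → ℝ`,
`a 0 = a00, a 1 = a10, a 2 = a01, a 3 = a20, a 4 = a11, a 5 = a02,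
 a 6 = b00, a 7 = b10, a 8 = b01, a 9 = b20, a 10 = b11, a 11 = b02`,
so that `p = a00 + a10*x + a01*y + a20*x^2 + 2*a11*x*y + a02*y^2` and
`q = b00 + b10*x + b01*y + b20*x^2 + 2*b11*x*y + b02*y^2`. -/

/-- linear part of `p` -/
def p1f (a : Fin 12 → ℝ) (x y : ℝ) : ℝ := a 1 * x + a 2 * y
/-- linear part of `q` -/
def q1f (a : Fin 12 → ℝ) (x y : ℝ) : ℝ := a 7 * x + a 8 * y
/-- quadratic part of `p` -/
def p2f (a : Fin 12 → ℝ) (x y : ℝ) : ℝ := a 3 * x ^ 2 + 2 * a 4 * x * y + a 5 * y ^ 2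
/-- quadratic part of `q` -/
def q2f (a : Fin 12 → ℝ) (x y : ℝ) : ℝ := a 9 * x ^ 2 + 2 * a 10 * x * y + a 11 * y ^ 2
/-- the polynomial `p` -/
def pf (a : Fin 12 → ℝ) (x y : ℝ) : ℝ := a 0 + p1f a x y + p2f a x y
/-- the polynomial `q` -/
def qf (a : Fin 12 → ℝ) (x y : ℝ) : ℝ := a 6 + q1f a x y + q2f a x y

/-- the invariant μ₀ -/
def mu0f (a : Fin 12 → ℝ) : ℝ :=
  (a 3 * a 11 - a 5 * a 9) ^ 2 - 4 * (a 3 * a 10 - a 4 * a 9) * (a 4 * a 11 - a 5 * a 10)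

/-- the comitant `K`, the Jacobian of `(p₂, q₂)` -/
def Kf (a : Fin 12 → ℝ) (x y : ℝ) : ℝ :=
  (2 * a 3 * x + 2 * a 4 * y) * (2 * a 10 * x + 2 * a 11 * y)
    - (2 * a 4 * x + 2 * a 5 * y) * (2 * a 9 * x + 2 * a 10 * y)

/-- the comitant `H`: minus the discriminant (in `x²,xy,y²`-coefficients) of
`α·p₂ + β·q₂` evaluated at `α = y`, `β = -x` -/
def Hf (a : Fin 12 → ℝ) (x y : ℝ) : ℝ :=
  -((2 * (a 4 * y - a 10 * x)) ^ 2 - 4 * (a 3 * y - a 9 * x) * (a 5 * y - a 11 * x))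

/-- the comitant `C₂ = y·p₂ - x·q₂` -/
def C2f (a : Fin 12 → ℝ) (x y : ℝ) : ℝ := y * p2f a x y - x * q2f a x y

/-- coefficient of `x³` in `C₂` -/
def cc0 (a : Fin 12 → ℝ) : ℝ := -(a 9)
/-- coefficient of `x²y` in `C₂` -/
def cc1 (a : Fin 12 → ℝ) : ℝ := a 3 - 2 * a 10
/-- coefficient of `xy²` in `C₂` -/
def cc2 (a : Fin 12 → ℝ) : ℝ := 2 * a 4 - a 11
/-- coefficient of `y³` in `C₂` -/
def cc3 (a : Fin 12 → ℝ) : ℝ := a 5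

/-- the invariant η, the discriminant of the binary cubic `C₂` -/
def etaf (a : Fin 12 → ℝ) : ℝ :=
  (cc1 a) ^ 2 * (cc2 a) ^ 2 - 4 * cc0 a * (cc2 a) ^ 3 - 4 * (cc1 a) ^ 3 * cc3 a
    + 18 * cc0 a * cc1 a * cc2 a * cc3 a - 27 * (cc0 a) ^ 2 * (cc3 a) ^ 2

/-- the comitant `M`, twice the Hessian of `C₂` -/
def Mf (a : Fin 12 → ℝ) (x y : ℝ) : ℝ :=
  2 * ((6 * cc0 a * x + 2 * cc1 a * y) * (2 * cc2 a * x + 6 * cc3 a * y)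
    - (2 * cc1 a * x + 2 * cc2 a * y) ^ 2)

/-- the comitant `L = 2K - 4H - M` -/
def Lf (a : Fin 12 → ℝ) (x y : ℝ) : ℝ := 2 * Kf a x y - 4 * Hf a x y - Mf a x y
/-- the comitant `N = K + H` -/
def Nf (a : Fin 12 → ℝ) (x y : ℝ) : ℝ := Kf a x y + Hf a x y
/-- the comitant `R = L + 8K` -/
def Rf (a : Fin 12 → ℝ) (x y : ℝ) : ℝ := Lf a x y + 8 * Kf a x y
/-- the comitant `K₁ = p₁q₂ - p₂q₁` -/
def K1f (a : Fin 12 → ℝ) (x y : ℝ) : ℝ := p1f a x y * q2f a x y - p2f a x y * q1f a x y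

/-- `p₂` as a polynomial in `ℂ[x,y]` -/
def p2C (a : Fin 12 → ℝ) : MvPolynomial (Fin 2) ℂ :=
  C (a 3 : ℂ) * X 0 ^ 2 + C (2 * a 4 : ℂ) * X 0 * X 1 + C (a 5 : ℂ) * X 1 ^ 2
/-- `q₂` as a polynomial in `ℂ[x,y]` -/
def q2C (a : Fin 12 → ℝ) : MvPolynomial (Fin 2) ℂ :=
  C (a 9 : ℂ) * X 0 ^ 2 + C (2 * a 10 : ℂ) * X 0 * X 1 + C (a 11 : ℂ) * X 1 ^ 2

/-- `d` is a greatest common divisor of `p` and `q` -/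
def IsGcdOf (d p q : MvPolynomial (Fin 2) ℂ) : Prop :=
  d ∣ p ∧ d ∣ q ∧ ∀ e : MvPolynomial (Fin 2) ℂ, e ∣ p → e ∣ q → e ∣ d

/-- the cubic form `C₂` regarded over `ℂ` -/
def C2c (a : Fin 12 → ℝ) (x y : ℂ) : ℂ :=
  (cc0 a : ℂ) * x ^ 3 + (cc1 a : ℂ) * x ^ 2 * y + (cc2 a : ℂ) * x * y ^ 2 + (cc3 a : ℂ) * y ^ 3

/-- the complex linear form `b·x + c·y` is proportional to a real linear form -/
def RealProp (b c : ℂ) : Prop := ∃ (l : ℂ) (r s : ℝ), l ≠ 0 ∧ b = l * (r : ℂ) ∧ c = l * (s : ℂ)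

/-- coefficient vector of the translated system `p(x+α, y+β), q(x+α, y+β)` -/
def rT (a : Fin 12 → ℝ) (α β : ℝ) : Fin 12 → ℝ :=
  ![a 0 + a 1 * α + a 2 * β + a 3 * α ^ 2 + 2 * a 4 * α * β + a 5 * β ^ 2,
    a 1 + 2 * a 3 * α + 2 * a 4 * β,
    a 2 + 2 * a 4 * α + 2 * a 5 * β,
    a 3, a 4, a 5,
    a 6 + a 7 * α + a 8 * β + a 9 * α ^ 2 + 2 * a 10 * α * β + a 11 * β ^ 2,
    a 7 + 2 * a 9 * α + 2 * a 10 * β,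
    a 8 + 2 * a 10 * α + 2 * a 11 * β,
    a 9, a 10, a 11]

/-- binary forms in `x = X 0`, `y = X 1` with real coefficients -/
abbrev R2 := MvPolynomial (Fin 2) ℝ

/-- ∂/∂x -/
def pdx (f : R2) : R2 := pderiv 0 f
/-- ∂/∂y -/
def pdy (f : R2) : R2 := pderiv 1 f
/-- the Jacobian of two binary forms -/
def jacobP (f g : R2) : R2 := pdx f * pdy g - pdy f * pdx g
/-- the second transvectant `(f,g)⁽²⁾` -/
def transv2 (f g : R2) : R2 :=
  pdx (pdx f) * pdy (pdy g) - 2 * pdx (pdy f) * pdx (pdy g) + pdy (pdy f) * pdx (pdx g)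

/-- `p₁` as a binary form -/
def p1P (a : Fin 12 → ℝ) : R2 := C (a 1) * X 0 + C (a 2) * X 1
/-- `q₁` as a binary form -/
def q1P (a : Fin 12 → ℝ) : R2 := C (a 7) * X 0 + C (a 8) * X 1
/-- `p₂` as a binary form -/
def p2P (a : Fin 12 → ℝ) : R2 := C (a 3) * X 0 ^ 2 + C (2 * a 4) * X 0 * X 1 + C (a 5) * X 1 ^ 2
/-- `q₂` as a binary form -/
def q2P (a : Fin 12 → ℝ) : R2 := C (a 9) * X 0 ^ 2 + C (2 * a 10) * X 0 * X 1 + C (a 11) * X 1 ^ 2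
/-- `C₀ = y·p₀ - x·q₀` -/
def C0P (a : Fin 12 → ℝ) : R2 := C (a 0) * X 1 - C (a 6) * X 0
/-- `C₁ = y·p₁ - x·q₁` -/
def C1P (a : Fin 12 → ℝ) : R2 := X 1 * p1P a - X 0 * q1P a
/-- `C₂ = y·p₂ - x·q₂` -/
def C2P (a : Fin 12 → ℝ) : R2 := X 1 * p2P a - X 0 * q2P a
/-- the comitant `K` as a binary form -/
def KP (a : Fin 12 → ℝ) : R2 := jacobP (p2P a) (q2P a)
/-- the comitant `M` (twice the Hessian of `C₂`) as a binary form -/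
def MP (a : Fin 12 → ℝ) : R2 :=
  2 * (pdx (pdx (C2P a)) * pdy (pdy (C2P a)) - (pdx (pdy (C2P a))) ^ 2)
/-- the comitant `H` as a binary form -/
def HP (a : Fin 12 → ℝ) : R2 :=
  -((2 * (C (a 4) * X 1 - C (a 10) * X 0)) ^ 2
    - 4 * (C (a 3) * X 1 - C (a 9) * X 0) * (C (a 5) * X 1 - C (a 11) * X 0))
/-- the comitant `L = 2K - 4H - M` as a binary form -/
def LP (a : Fin 12 → ℝ) : R2 := 2 * KP a - 4 * HP a - MP a
/-- the comitant `K₁ = p₁q₂ - p₂q₁` as a binary form -/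
def K1P (a : Fin 12 → ℝ) : R2 := p1P a * q2P a - p2P a * q1P a
/-- the invariant `D₁ = a10 + b01` -/
def D1v (a : Fin 12 → ℝ) : ℝ := a 1 + a 8
/-- the comitant `D₂ = ∂p₂/∂x + ∂q₂/∂y` -/
def D2P (a : Fin 12 → ℝ) : R2 := pdx (p2P a) + pdy (q2P a)
/-- `J₁ = Jacob(C₀, D₂)` -/
def J1P (a : Fin 12 → ℝ) : R2 := jacobP (C0P a) (D2P a)
/-- `J₂ = Jacob(C₀, C₂)` -/
def J2P (a : Fin 12 → ℝ) : R2 := jacobP (C0P a) (C2P a)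
/-- `J₃ = Discrim(C₁)`: for `C₁ = -b10·x² + (a10-b01)·xy + a01·y²` this is `B² - 4AC` -/
def J3v (a : Fin 12 → ℝ) : ℝ := (a 1 - a 8) ^ 2 + 4 * a 7 * a 2
/-- `J₄ = Jacob(C₁, D₂)` -/
def J4P (a : Fin 12 → ℝ) : R2 := jacobP (C1P a) (D2P a)
/-- the invariant `κ = (M,K)⁽²⁾` (a constant binary form) -/
def kappaP (a : Fin 12 → ℝ) : R2 := transv2 (MP a) (KP a)
/-- the invariant `κ₁ = (M,C₁)⁽²⁾` (a constant binary form) -/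
def kappa1P (a : Fin 12 → ℝ) : R2 := transv2 (MP a) (C1P a)
/-- the invariant `κ₂ = -J₁` -/
def kappa2f (a : Fin 12 → ℝ) : ℝ :=
  -((-(a 6)) * (2 * a 4 + 2 * a 11) - a 0 * (2 * a 3 + 2 * a 10))
/-- `ζ = M - 2K` -/
def zetaP (a : Fin 12 → ℝ) : R2 := MP a - 2 * KP a
/-- the comitant `K₂ = 4·Jacob(J₂,ζ) + 3·Jacob(C₁,ζ)·D₁ - ζ·(16J₁ + 3J₃ + 3D₁²)` -/
def K2P (a : Fin 12 → ℝ) : R2 :=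
  4 * jacobP (J2P a) (zetaP a) + C (3 * D1v a) * jacobP (C1P a) (zetaP a)
    - zetaP a * (16 * J1P a + C (3 * J3v a + 3 * (D1v a) ^ 2))
/-- the comitant `K₃ = 2C₂²(2J₁-3J₃) + C₂(3C₀K - 2C₁J₄) + 2K₁(C₁D₂ + 3K₁)` -/
def K3P (a : Fin 12 → ℝ) : R2 :=
  2 * (C2P a) ^ 2 * (2 * J1P a - C (3 * J3v a))
    + C2P a * (3 * C0P a * KP a - 2 * C1P a * J4P a)
    + 2 * K1P a * (C1P a * D2P a + 3 * K1P a)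

/-- polynomials in the 12 coefficient variables (indices 0–11) and `x = X 12`, `y = X 13` -/
abbrev R14 := MvPolynomial (Fin 14) ℝ

/-- the differential operator `L₁` -/
def L1op (f : R14) : R14 :=
  2 * X 0 * pderiv 1 f + X 1 * pderiv 3 f + C (1/2 : ℝ) * X 2 * pderiv 4 f
    + 2 * X 6 * pderiv 7 f + X 7 * pderiv 9 f + C (1/2 : ℝ) * X 8 * pderiv 10 f
/-- the differential operator `L₂` -/
def L2op (f : R14) : R14 :=
  2 * X 0 * pderiv 2 f + X 2 * pderiv 5 f + C (1/2 : ℝ) * X 1 * pderiv 4 f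
    + 2 * X 6 * pderiv 8 f + X 8 * pderiv 11 f + C (1/2 : ℝ) * X 7 * pderiv 10 f
/-- the differential operator `𝓛 = x·L₂ - y·L₁` -/
def LLop (f : R14) : R14 := X 12 * L2op f - X 13 * L1op f

/-- `μ₀` as an element of `ℝ[a₀₀,…,b₀₂,x,y]` -/
def mu0P : R14 :=
  (X 3 * X 11 - X 5 * X 9) ^ 2 - 4 * (X 3 * X 10 - X 4 * X 9) * (X 4 * X 11 - X 5 * X 10)

/-- `μᵢ = 𝓛⁽ⁱ⁾(μ₀)/i!` -/
def muP (i : ℕ) : R14 := ((i.factorial : ℝ)⁻¹) • (LLop^[i] mu0P)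

/-- evaluation point assigning the coefficients `a` and the values `x`, `y` -/
def evalAt (a : Fin 12 → ℝ) (x y : ℝ) : Fin 14 → ℝ := fun i =>
  if h : (i : ℕ) < 12 then a ⟨(i : ℕ), h⟩ else if (i : ℕ) = 12 then x else y

/-- the value `μᵢ(a, x, y)` -/
def muf (i : ℕ) (a : Fin 12 → ℝ) (x y : ℝ) : ℝ := eval (evalAt a x y) (muP i)

/-- complex evaluation point: coefficients `a` (cast to `ℂ`) and complex values `x`, `y` -/
def evalAtC (a : Fin 12 → ℝ) (x y : ℂ) : Fin 14 → ℂ := fun i =>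
  if h : (i : ℕ) < 12 then ((a ⟨(i : ℕ), h⟩ : ℝ) : ℂ) else if (i : ℕ) = 12 then x else y

/-- the value of `μᵢ` extended to complex arguments -/
def mufC (i : ℕ) (a : Fin 12 → ℝ) (x y : ℂ) : ℂ := aeval (evalAtC a x y) (muP i)

/-- the homogenization `P(X,Y,Z) = Z²·p(X/Z,Y/Z)` over `ℂ` -/
def PfC (a : Fin 12 → ℝ) (Xv Yv Zv : ℂ) : ℂ :=
  (a 0 : ℂ) * Zv ^ 2 + ((a 1 : ℂ) * Xv + (a 2 : ℂ) * Yv) * Zv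
    + ((a 3 : ℂ) * Xv ^ 2 + 2 * (a 4 : ℂ) * Xv * Yv + (a 5 : ℂ) * Yv ^ 2)
/-- the homogenization `Q(X,Y,Z) = Z²·q(X/Z,Y/Z)` over `ℂ` -/
def QfC (a : Fin 12 → ℝ) (Xv Yv Zv : ℂ) : ℂ :=
  (a 6 : ℂ) * Zv ^ 2 + ((a 7 : ℂ) * Xv + (a 8 : ℂ) * Yv) * Zv
    + ((a 9 : ℂ) * Xv ^ 2 + 2 * (a 10 : ℂ) * Xv * Yv + (a 11 : ℂ) * Yv ^ 2)

/-- `b` is the coefficient vector `r_g(a)` of the system transformed by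
`g ∈ GL(2,ℝ)` with matrix `m` and inverse matrix `n`:
`(p̃,q̃)(x̃,ỹ) = m·(p,q)(g⁻¹(x̃,ỹ))`. -/
def IsTransformed (m n : Matrix (Fin 2) (Fin 2) ℝ) (a b : Fin 12 → ℝ) : Prop :=
  m * n = 1 ∧ ∀ x y : ℝ,
    pf b x y = m 0 0 * pf a (n 0 0 * x + n 0 1 * y) (n 1 0 * x + n 1 1 * y)
               + m 0 1 * qf a (n 0 0 * x + n 0 1 * y) (n 1 0 * x + n 1 1 * y)
    ∧ qf b x y = m 1 0 * pf a (n 0 0 * x + n 0 1 * y) (n 1 0 * x + n 1 1 * y)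
               + m 1 1 * qf a (n 0 0 * x + n 0 1 * y) (n 1 0 * x + n 1 1 * y)

/-- `(P2, Q2)` is the pair of degree-2 homogeneous parts of the system transformed by
`g ∈ GL(2,ℝ)` with matrix `m` and inverse matrix `n`. -/
def Quad2Transformed (m n : Matrix (Fin 2) (Fin 2) ℝ) (a : Fin 12 → ℝ)
    (P2 Q2 : ℝ → ℝ → ℝ) : Prop :=
  m * n = 1 ∧ ∀ x y : ℝ,
    P2 x y = m 0 0 * p2f a (n 0 0 * x + n 0 1 * y) (n 1 0 * x + n 1 1 * y)
               + m 0 1 * q2f a (n 0 0 * x + n 0 1 * y) (n 1 0 * x + n 1 1 * y)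
    ∧ Q2 x y = m 1 0 * p2f a (n 0 0 * x + n 0 1 * y) (n 1 0 * x + n 1 1 * y)
               + m 1 1 * q2f a (n 0 0 * x + n 0 1 * y) (n 1 0 * x + n 1 1 * y)

/-! The translation formula is a shadow of the invariance of the resultant. Homogenize `p`, `q`
to `P(u,v,w)`, `Q(u,v,w)` and put `ℓ = x v - y u`. The derivation `𝓛` acts on the coefficients of
the system as `d/dt` acts on those of the binary quadratics `P(u, v, t ℓ)`, `Q(u, v, t ℓ)`, so
`μ_k` is the `t^k`-coefficient of their resultant `Φ(t)`, a polynomial of degree at most `4`.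
Translating the system by `(α, β)` turns `P(u, v, t ℓ)` into `P(g(u,v), t/(1 + ξ t) · ℓ(g(u,v)))`
for a linear map `g` of determinant `1 + ξ t`; as the resultant of binary quadratics has weight `4`,
the translated `Φ` is `(1 + ξ t)^4 Φ(t / (1 + ξ t)) = ∑ₖ μ_k t^k (1 + ξ t)^(4-k)`. -/

section QuadraticForms

variable {R : Type*} [CommRing R]

/-- The resultant of `f 0 u² + 2 f 1 u v + f 2 v²` and `h 0 u² + 2 h 1 u v + h 2 v²`. -/
def quadRes (f h : Fin 3 → R) : R :=
  (f 0 * h 2 - f 2 * h 0) ^ 2 - 4 * (f 0 * h 1 - f 1 * h 0) * (f 1 * h 2 - f 2 * h 1)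

/-- The coefficients, in the convention of `quadRes`, of `f (p u + q v, r u + s v)`. -/
def quadComp (f : Fin 3 → R) (p q r s : R) : Fin 3 → R :=
  ![f 0 * p ^ 2 + 2 * f 1 * p * r + f 2 * r ^ 2,
    f 0 * p * q + f 1 * (p * s + q * r) + f 2 * r * s,
    f 0 * q ^ 2 + 2 * f 1 * q * s + f 2 * s ^ 2]

theorem quadRes_quadComp (f h : Fin 3 → R) (p q r s : R) :
    quadRes (quadComp f p q r s) (quadComp h p q r s) = (p * s - q * r) ^ 4 * quadRes f h := by
  simp only [quadRes, quadComp, Matrix.cons_val]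
  ring

theorem map_quadRes {S : Type*} [CommRing S] (φ : R →+* S) (f h : Fin 3 → R) :
    φ (quadRes f h) = quadRes (φ ∘ f) (φ ∘ h) := by
  simp [quadRes, map_ofNat]

theorem natDegree_quadRes_le {f h : Fin 3 → Polynomial R}
    (hf : ∀ i, (f i).natDegree ≤ i) (hh : ∀ i, (h i).natDegree ≤ i) :
    (quadRes f h).natDegree ≤ 4 := by
  have cross (i j : Fin 3) : (f i * h j - f j * h i).natDegree ≤ i + j :=
    (Polynomial.natDegree_sub_le _ _).trans <| max_le
      (Polynomial.natDegree_mul_le_of_le (hf i) (hh j))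
      ((Polynomial.natDegree_mul_le_of_le (hf j) (hh i)).trans_eq (add_comm _ _))
  refine (Polynomial.natDegree_sub_le _ _).trans (max_le ?_ ?_)
  · exact Polynomial.natDegree_pow_le_of_le 2 (cross 0 2)
  · exact Polynomial.natDegree_mul_le_of_le (Polynomial.natDegree_mul_le_of_le
      (Polynomial.natDegree_ofNat 4).le (cross 0 1)) (cross 1 2)

end QuadraticForms

section CoeffFlow

variable {R A : Type*} [CommRing R] [CommRing A] [Algebra R A]

/-- Formally, `P = exp (t D) (P.coeff 0)`. -/
def IsCoeffFlow (D : Derivation R A A) (P : Polynomial A) : Prop :=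
  ∀ k, D (P.coeff k) = (Polynomial.derivative P).coeff k

variable {D : Derivation R A A} {P Q : Polynomial A}

theorem IsCoeffFlow.sub (hP : IsCoeffFlow D P) (hQ : IsCoeffFlow D Q) :
    IsCoeffFlow D (P - Q) := fun k => by
  simp only [Polynomial.coeff_sub, map_sub, hP k, hQ k]

theorem IsCoeffFlow.mul (hP : IsCoeffFlow D P) (hQ : IsCoeffFlow D Q) :
    IsCoeffFlow D (P * Q) := fun k => by
  rw [Polynomial.coeff_mul, map_sum, Polynomial.derivative_mul, Polynomial.coeff_add,
    Polynomial.coeff_mul, Polynomial.coeff_mul, ← Finset.sum_add_distrib]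
  refine Finset.sum_congr rfl fun ij _ => ?_
  rw [Derivation.leibniz, hP, hQ, smul_eq_mul, smul_eq_mul]
  ring

theorem isCoeffFlow_C {c : A} (hc : D c = 0) : IsCoeffFlow D (Polynomial.C c) := fun k => by
  rcases k with _ | k <;> simp [Polynomial.coeff_C, hc]

theorem isCoeffFlow_quadratic {e₀ e₁ e₂ : A} (h₀ : D e₀ = e₁) (h₁ : D e₁ = 2 * e₂)
    (h₂ : D e₂ = 0) :
    IsCoeffFlow D (Polynomial.C e₀ + Polynomial.C e₁ * Polynomial.X
      + Polynomial.C e₂ * Polynomial.X ^ 2) := fun k => by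
  rcases k with _ | _ | _ | k <;>
    simp [Polynomial.coeff_X, Polynomial.coeff_C, Polynomial.coeff_X_pow, h₀, h₁, h₂,
      mul_comm (2 : A), one_add_one_eq_two]

theorem IsCoeffFlow.iterate_coeff_zero (hP : IsCoeffFlow D P) (k : ℕ) :
    D^[k] (P.coeff 0) = k.factorial • P.coeff k := by
  induction k with
  | zero => simp
  | succ k ih =>
    rw [Function.iterate_succ_apply', ih, map_nsmul, hP, Polynomial.coeff_derivative,
      Nat.factorial_succ, mul_comm, mul_nsmul, ← Nat.cast_succ, ← nsmul_eq_mul]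

theorem IsCoeffFlow.quadRes {f h : Fin 3 → Polynomial A} (hf : ∀ i, IsCoeffFlow D (f i))
    (hh : ∀ i, IsCoeffFlow D (h i)) : IsCoeffFlow D (quadRes f h) := by
  have four : IsCoeffFlow D 4 := by
    rw [← map_ofNat Polynomial.C 4]
    exact isCoeffFlow_C (by exact_mod_cast D.map_natCast 4)
  have cross (i j : Fin 3) : IsCoeffFlow D (f i * h j - f j * h i) :=
    ((hf i).mul (hh j)).sub ((hf j).mul (hh i))
  rw [QSinf.quadRes, sq]
  exact ((cross 0 2).mul (cross 0 2)).sub ((four.mul (cross 0 1)).mul (cross 1 2))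

end CoeffFlow

section Binomial

variable {R : Type*} [CommRing R]

theorem coeff_one_add_C_mul_X_pow (r : R) (m i : ℕ) :
    ((1 + Polynomial.C r * Polynomial.X) ^ m).coeff i = m.choose i * r ^ i := by
  have hcomp : (1 + Polynomial.C r * Polynomial.X) ^ m
      = ((1 + Polynomial.X) ^ m).comp (Polynomial.C r * Polynomial.X) := by
    simp [Polynomial.pow_comp]
  rw [hcomp, Polynomial.comp_C_mul_X_coeff, Polynomial.coeff_one_add_X_pow]

theorem coeff_sum_C_mul_X_pow_mul_one_add_pow (c : ℕ → R) (r : R) {s : ℕ} (hs : s ≤ 4) :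
    (∑ k ∈ Finset.range 5, Polynomial.C (c k) * Polynomial.X ^ k
        * (1 + Polynomial.C r * Polynomial.X) ^ (4 - k)).coeff s =
      c s + ∑ k ∈ Finset.range s, ((4 - k).choose (s - k) : R) * r ^ (s - k) * c k := by
  have hrange : (Finset.range 5).filter (· ≤ s) = Finset.range (s + 1) := by
    ext k; simp only [Finset.mem_filter, Finset.mem_range]; omega
  simp only [Polynomial.finsetSum_coeff, mul_assoc, Polynomial.coeff_C_mul,
    Polynomial.coeff_X_pow_mul', coeff_one_add_C_mul_X_pow, mul_ite, mul_zero]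
  rw [← Finset.sum_filter, hrange, Finset.sum_range_succ, add_comm]
  simp only [Nat.sub_self, Nat.choose_zero_right, Nat.cast_one, pow_zero, mul_one]
  congr 1
  exact Finset.sum_congr rfl fun k _ => by ring

end Binomial

section Tilt

variable {R : Type*} [CommRing R] [Algebra ℝ R]

/-- The coefficients, in the convention of `quadRes`, of `P(u, v, t (x v - y u))` as polynomials
in `t`, where `P(u,v,w) = c₀₀ w² + (c₁₀ u + c₀₁ v) w + c₂₀ u² + 2 c₁₁ u v + c₀₂ v²`. -/
def tilt (c₀₀ c₁₀ c₀₁ c₂₀ c₁₁ c₀₂ x y : R) : Fin 3 → Polynomial R :=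
  ![Polynomial.C c₂₀ + Polynomial.C (-(y * c₁₀)) * Polynomial.X
      + Polynomial.C (y ^ 2 * c₀₀) * Polynomial.X ^ 2,
    Polynomial.C c₁₁ + Polynomial.C ((2⁻¹ : ℝ) • (x * c₁₀ - y * c₀₁)) * Polynomial.X
      + Polynomial.C (-(x * y * c₀₀)) * Polynomial.X ^ 2,
    Polynomial.C c₀₂ + Polynomial.C (x * c₀₁) * Polynomial.X
      + Polynomial.C (x ^ 2 * c₀₀) * Polynomial.X ^ 2]

def tiltedRes (a : Fin 12 → R) (x y : R) : Polynomial R :=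
  quadRes (tilt (a 0) (a 1) (a 2) (a 3) (a 4) (a 5) x y)
    (tilt (a 6) (a 7) (a 8) (a 9) (a 10) (a 11) x y)

theorem isCoeffFlow_tilt {D : Derivation ℝ R R} {c₀₀ c₁₀ c₀₁ c₂₀ c₁₁ c₀₂ x y : R}
    (hx : D x = 0) (hy : D y = 0) (h₀₀ : D c₀₀ = 0) (h₁₀ : D c₁₀ = -(2 * y * c₀₀))
    (h₀₁ : D c₀₁ = 2 * x * c₀₀) (h₂₀ : D c₂₀ = -(y * c₁₀))
    (h₁₁ : D c₁₁ = (2⁻¹ : ℝ) • (x * c₁₀ - y * c₀₁)) (h₀₂ : D c₀₂ = x * c₀₁) (i : Fin 3) :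
    IsCoeffFlow D (tilt c₀₀ c₁₀ c₀₁ c₂₀ c₁₁ c₀₂ x y i) := by
  fin_cases i <;> apply isCoeffFlow_quadratic <;>
    simp only [map_neg, map_sub, Derivation.map_smul, Derivation.leibniz, Derivation.leibniz_pow,
      smul_eq_mul, hx, hy, h₀₀, h₁₀, h₀₁, h₂₀, h₁₁, h₀₂, mul_neg, mul_zero, add_zero, neg_neg,
      neg_zero, nsmul_zero, Nat.add_one_sub_one, pow_one]
  · ring
  · rw [show -(x * (2 * y * c₀₀)) - y * (2 * x * c₀₀) = (2 : ℝ) • -(2 * (x * y * c₀₀)) by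
      rw [two_smul]; ring, inv_smul_smul₀ two_ne_zero]
  · ring

theorem map_tiltedRes {S : Type*} [CommRing S] [Algebra ℝ S] (φ : R →ₐ[ℝ] S)
    (a : Fin 12 → R) (x y : R) :
    (tiltedRes a x y).map (φ : R →+* S) = tiltedRes (φ ∘ a) (φ x) (φ y) := by
  rw [tiltedRes, tiltedRes, ← Polynomial.coe_mapRingHom, map_quadRes]
  congr 1 <;> funext i <;> fin_cases i <;> simp [tilt]

end Tilt

def L1Derivation : Derivation ℝ R14 R14 :=
  (2 * X 0 : R14) • pderiv 1 + (X 1 : R14) • pderiv 3 + (C (1/2 : ℝ) * X 2 : R14) • pderiv 4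
    + (2 * X 6 : R14) • pderiv 7 + (X 7 : R14) • pderiv 9 + (C (1/2 : ℝ) * X 8 : R14) • pderiv 10

def L2Derivation : Derivation ℝ R14 R14 :=
  (2 * X 0 : R14) • pderiv 2 + (X 2 : R14) • pderiv 5 + (C (1/2 : ℝ) * X 1 : R14) • pderiv 4
    + (2 * X 6 : R14) • pderiv 8 + (X 8 : R14) • pderiv 11 + (C (1/2 : ℝ) * X 7 : R14) • pderiv 10

def LLDerivation : Derivation ℝ R14 R14 :=
  (X 12 : R14) • L2Derivation - (X 13 : R14) • L1Derivation

theorem coe_LLDerivation : ⇑LLDerivation = LLop := funext fun f => by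
  simp only [LLDerivation, L1Derivation, L2Derivation, LLop, L1op, L2op, Derivation.coe_sub,
    Derivation.coe_add, Derivation.coe_smul, Pi.sub_apply, Pi.add_apply, Pi.smul_apply, smul_eq_mul]

def coeffVars : Fin 12 → R14 := ![X 0, X 1, X 2, X 3, X 4, X 5, X 6, X 7, X 8, X 9, X 10, X 11]

theorem isCoeffFlow_tiltedRes :
    IsCoeffFlow LLDerivation (tiltedRes coeffVars (X 12) (X 13)) := by
  refine IsCoeffFlow.quadRes (isCoeffFlow_tilt ?_ ?_ ?_ ?_ ?_ ?_ ?_ ?_)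
      (isCoeffFlow_tilt ?_ ?_ ?_ ?_ ?_ ?_ ?_ ?_) <;>
    simp only [coeffVars, coe_LLDerivation, LLop, L1op, L2op, pderiv_X, Matrix.cons_val,
      Matrix.cons_val_zero, Matrix.cons_val_one, Fin.isValue, ne_eq, Fin.reduceEq,
      not_false_eq_true, Pi.single_eq_of_ne, Pi.single_eq_same, mul_zero, mul_one, add_zero,
      zero_add, zero_sub, sub_zero, sub_self, one_div, neg_inj, smul_eq_C_mul] <;>
    ring

theorem tiltedRes_coeff_zero : (tiltedRes coeffVars (X 12) (X 13)).coeff 0 = mu0P := by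
  rw [Polynomial.coeff_zero_eq_eval_zero, tiltedRes, ← Polynomial.coe_evalRingHom, map_quadRes]
  simp [tilt, quadRes, mu0P, coeffVars]

theorem muP_eq_coeff_tiltedRes (k : ℕ) : muP k = (tiltedRes coeffVars (X 12) (X 13)).coeff k := by
  rw [muP, ← coe_LLDerivation, ← tiltedRes_coeff_zero, isCoeffFlow_tiltedRes.iterate_coeff_zero,
    ← Nat.cast_smul_eq_nsmul ℝ, smul_smul, inv_mul_cancel₀ (by positivity), one_smul]

theorem muf_eq_coeff_tiltedRes (k : ℕ) (a : Fin 12 → ℝ) (x y : ℝ) :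
    muf k a x y = (tiltedRes a x y).coeff k := by
  have ha : (aeval (evalAt a x y) : R14 →ₐ[ℝ] ℝ) ∘ coeffVars = a := by
    funext i; fin_cases i <;> simp [coeffVars, evalAt]
  rw [muf, muP_eq_coeff_tiltedRes, ← coe_aeval_eq_eval, ← Polynomial.coeff_map,
    map_tiltedRes, ha, aeval_X, aeval_X]
  rfl

/-- Translating by `(α, β)` replaces `(u, v)` by `g(u, v) = (u + α t ℓ, v + β t ℓ)`, where
`ℓ = x v - y u`; since `ℓ ∘ g = (1 + ξ t) ℓ`, this is the tilt at `t / (1 + ξ t)` composed with `g`. -/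
theorem tilt_translate (c₀₀ c₁₀ c₀₁ c₂₀ c₁₁ c₀₂ x y α β t : ℝ)
    (hs : 1 + (β * x - α * y) * t ≠ 0) :
    Polynomial.evalRingHom t ∘ tilt (c₀₀ + c₁₀ * α + c₀₁ * β + c₂₀ * α ^ 2 + 2 * c₁₁ * α * β
        + c₀₂ * β ^ 2) (c₁₀ + 2 * c₂₀ * α + 2 * c₁₁ * β) (c₀₁ + 2 * c₁₁ * α + 2 * c₀₂ * β)
        c₂₀ c₁₁ c₀₂ x y =
      quadComp (Polynomial.evalRingHom (t / (1 + (β * x - α * y) * t))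
          ∘ tilt c₀₀ c₁₀ c₀₁ c₂₀ c₁₁ c₀₂ x y)
        (1 - α * t * y) (α * t * x) (-(β * t * y)) (1 + β * t * x) := by
  set s := 1 + (β * x - α * y) * t with hs_def
  funext i
  fin_cases i <;>
    simp only [tilt, quadComp, Function.comp_apply, Polynomial.coe_evalRingHom,
      Polynomial.eval_add, Polynomial.eval_mul, Polynomial.eval_pow, Polynomial.eval_C,
      Polynomial.eval_X, smul_eq_mul, Matrix.cons_val, Matrix.cons_val_zero, Matrix.cons_val_one,
      Fin.zero_eta, Fin.mk_one, Fin.reduceFinMk, Fin.isValue] <;>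
    field_simp <;> rw [hs_def] <;> ring

theorem eval_tiltedRes_rT (a : Fin 12 → ℝ) (α β x y t : ℝ) (hs : 1 + (β * x - α * y) * t ≠ 0) :
    (tiltedRes (rT a α β) x y).eval t =
      (1 + (β * x - α * y) * t) ^ 4 * (tiltedRes a x y).eval (t / (1 + (β * x - α * y) * t)) := by
  simp only [tiltedRes, ← Polynomial.coe_evalRingHom, map_quadRes, rT, Matrix.cons_val]
  rw [tilt_translate _ _ _ _ _ _ _ _ _ _ _ hs, tilt_translate _ _ _ _ _ _ _ _ _ _ _ hs,
    quadRes_quadComp]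
  ring

/-- In the coordinates `(u, v) = (x U - y V, y U + x V)` one has `x v - y u = (x² + y²) V`, so the
`i`-th coefficient has degree at most `i` in `t`. -/
theorem natDegree_quadComp_tilt_le (c₀₀ c₁₀ c₀₁ c₂₀ c₁₁ c₀₂ x y : ℝ) (i : Fin 3) :
    (quadComp (tilt c₀₀ c₁₀ c₀₁ c₂₀ c₁₁ c₀₂ x y) (Polynomial.C x) (Polynomial.C (-y))
      (Polynomial.C y) (Polynomial.C x) i).natDegree ≤ i := by
  match i with
  | 0 =>
    rw [show quadComp _ _ _ _ _ 0 = Polynomial.C (c₂₀ * x ^ 2 + 2 * c₁₁ * x * y + c₀₂ * y ^ 2) from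
      Polynomial.funext fun t => by
        simp only [quadComp, tilt, Matrix.cons_val, Matrix.cons_val_zero, Matrix.cons_val_one,
          Polynomial.eval_add, Polynomial.eval_mul, Polynomial.eval_pow, Polynomial.eval_C,
          Polynomial.eval_X, Polynomial.eval_ofNat, smul_eq_mul]
        ring]
    exact (Polynomial.natDegree_C _).le
  | 1 =>
    rw [show quadComp _ _ _ _ _ 1 = Polynomial.C ((x ^ 2 + y ^ 2) * (x * c₁₀ + y * c₀₁) / 2)
        * Polynomial.X + Polynomial.C ((c₀₂ - c₂₀) * x * y + c₁₁ * (x ^ 2 - y ^ 2)) from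
      Polynomial.funext fun t => by
        simp only [quadComp, tilt, Matrix.cons_val, Matrix.cons_val_zero, Matrix.cons_val_one,
          Polynomial.eval_add, Polynomial.eval_mul, Polynomial.eval_pow, Polynomial.eval_C,
          Polynomial.eval_X, smul_eq_mul]
        ring]
    exact Polynomial.natDegree_linear_le
  | 2 =>
    show _ ≤ 2
    simp only [quadComp, tilt, Matrix.cons_val]
    compute_degree

theorem natDegree_tiltedRes_le (a : Fin 12 → ℝ) (x y : ℝ) : (tiltedRes a x y).natDegree ≤ 4 := by
  by_cases hxy : x ^ 2 + y ^ 2 = 0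
  · obtain ⟨rfl, rfl⟩ : x = 0 ∧ y = 0 := ⟨by nlinarith, by nlinarith⟩
    refine natDegree_quadRes_le ?_ ?_ <;> intro i <;> fin_cases i <;> simp [tilt]
  · have key := quadRes_quadComp (tilt (a 0) (a 1) (a 2) (a 3) (a 4) (a 5) x y)
      (tilt (a 6) (a 7) (a 8) (a 9) (a 10) (a 11) x y) (Polynomial.C x) (Polynomial.C (-y))
      (Polynomial.C y) (Polynomial.C x)
    have hdet : (Polynomial.C x * Polynomial.C x - Polynomial.C (-y) * Polynomial.C y) ^ 4
        = Polynomial.C ((x ^ 2 + y ^ 2) ^ 4) := by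
      simp only [map_pow, map_add, map_neg]
      ring
    rw [← Polynomial.natDegree_C_mul (pow_ne_zero 4 hxy), tiltedRes, ← hdet, ← key]
    exact natDegree_quadRes_le (natDegree_quadComp_tilt_le _ _ _ _ _ _ _ _)
      (natDegree_quadComp_tilt_le _ _ _ _ _ _ _ _)

theorem tiltedRes_rT (a : Fin 12 → ℝ) (α β x y : ℝ) :
    tiltedRes (rT a α β) x y = ∑ k ∈ Finset.range 5,
      Polynomial.C ((tiltedRes a x y).coeff k) * Polynomial.X ^ k
        * (1 + Polynomial.C (β * x - α * y) * Polynomial.X) ^ (4 - k) := by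
  have hpole : {t : ℝ | 1 + (β * x - α * y) * t = 0}.Subsingleton := fun t₁ h₁ t₂ h₂ => by
    have hξ : β * x - α * y ≠ 0 := by rintro h; simp [h] at h₁
    exact mul_left_cancel₀ hξ (by linarith [h₁.out, h₂.out])
  refine Polynomial.eq_of_infinite_eval_eq _ _ (hpole.finite.infinite_compl.mono
    fun t (hs : 1 + (β * x - α * y) * t ≠ 0) => ?_)
  rw [Set.mem_ofPred_eq, eval_tiltedRes_rT a α β x y t hs,
    Polynomial.eval_eq_sum_range' (Nat.lt_succ_of_le (natDegree_tiltedRes_le a x y)),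
    Polynomial.eval_finsetSum, Finset.mul_sum]
  refine Finset.sum_congr rfl fun k hk => ?_
  rw [← pow_sub_mul_pow _ (Nat.lt_succ_iff.mp (Finset.mem_range.mp hk))]
  simp only [Polynomial.eval_mul, Polynomial.eval_C, Polynomial.eval_pow, Polynomial.eval_add,
    Polynomial.eval_one, Polynomial.eval_X, div_pow]
  field_simp

theorem mu_translation_formula_general (a : Fin 12 → ℝ) (α β : ℝ) (s : ℕ)
    (hs4 : s ≤ 4) (x y : ℝ) :
    muf s (rT a α β) x y =
      muf s a x y + ∑ k ∈ Finset.range s,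
        ((4 - k).choose (s - k) : ℝ) * (β * x - α * y) ^ (s - k) * muf k a x y := by
  simp only [muf_eq_coeff_tiltedRes]
  rw [tiltedRes_rT, coeff_sum_C_mul_X_pow_mul_one_add_pow _ _ hs4]

/-- the translation formula for the comitants `μ₁,…,μ₄`:
`μ_s(r_{α,β}(a),x,y) = μ_s(a,x,y) + Σ_{k<s} C(4-k, s-k)·ξ^{s-k}·μ_k(a,x,y)`
with `ξ = β·x - α·y`. -/
theorem mu_translation_formula (a : Fin 12 → ℝ) (α β : ℝ) (s : ℕ)
    (hs1 : 1 ≤ s) (hs4 : s ≤ 4) (x y : ℝ) :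
    muf s (rT a α β) x y =
      muf s a x y + ∑ k ∈ Finset.range s,
        ((4 - k).choose (s - k) : ℝ) * (β * x - α * y) ^ (s - k) * muf k a x y :=
  mu_translation_formula_general a α β s hs4 x y
end QSinf
end
end

section
/- Let a ∈ ℝ^12 satisfy η(a) = 0 and κ(a) = 0. Then for all α, β ∈ ℝ, κ1(r_{α,β}(a)) = κ1(a); that is, κ1 is a conditional T-comitant (invariant under translations) modulo the vanishing of η and κ. -/
open MvPolynomial Finset

noncomputable section

namespace QSinf

/-! A translation leaves the quadratic part, hence `M`, unchanged and adds
`α (y ∂ₓp₂ - x ∂ₓq₂) + β (y ∂_y p₂ - x ∂_y q₂)` to `C₁`. All forms involved are binary quadratics,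
whose second transvectant is a bilinear scalar, so `κ₁` becomes the affine function
`κ₁ + α sₓ + β s_y` of the translation. The squares of both slopes lie in the ideal generated by
`κ` and `η`; over `ℝ` they therefore vanish when `κ = η = 0`. -/

def quadForm (A B D : ℝ) : R2 := C A * X 0 ^ 2 + C B * X 0 * X 1 + C D * X 1 ^ 2

def transvQuad (A B D A' B' D' : ℝ) : ℝ := 4 * A * D' - 2 * B * B' + 4 * D * A'

lemma transv2_quadForm (A B D A' B' D' : ℝ) :
    transv2 (quadForm A B D) (quadForm A' B' D') = C (transvQuad A B D A' B' D') := by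
  simp only [transv2, quadForm, pdx, pdy, pow_two, map_add, pderiv_mul, pderiv_C, pderiv_one,
    map_zero, pderiv_X_self,
    pderiv_X_of_ne (by decide : (1 : Fin 2) ≠ 0), pderiv_X_of_ne (by decide : (0 : Fin 2) ≠ 1)]
  simp only [transvQuad, map_add, map_sub, map_mul, map_ofNat]
  ring

def coeffMxx (a : Fin 12 → ℝ) : ℝ := 24 * cc0 a * cc2 a - 8 * cc1 a ^ 2
def coeffMxy (a : Fin 12 → ℝ) : ℝ := 72 * cc0 a * cc3 a - 8 * cc1 a * cc2 a
def coeffMyy (a : Fin 12 → ℝ) : ℝ := 24 * cc1 a * cc3 a - 8 * cc2 a ^ 2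

lemma MP_eq_quadForm (a : Fin 12 → ℝ) :
    MP a = quadForm (coeffMxx a) (coeffMxy a) (coeffMyy a) := by
  simp only [MP, C2P, p2P, q2P, pdx, pdy, pow_two, map_add, map_sub, pderiv_mul, pderiv_C,
    pderiv_one, map_zero, pderiv_X_self,
    pderiv_X_of_ne (by decide : (1 : Fin 2) ≠ 0), pderiv_X_of_ne (by decide : (0 : Fin 2) ≠ 1)]
  simp only [quadForm, coeffMxx, coeffMxy, coeffMyy, cc0, cc1, cc2, cc3, map_sub, map_mul, map_neg,
    map_pow, map_ofNat]
  ring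

lemma KP_eq_quadForm (a : Fin 12 → ℝ) :
    KP a = quadForm (4 * (a 3 * a 10 - a 4 * a 9)) (4 * (a 3 * a 11 - a 5 * a 9))
      (4 * (a 4 * a 11 - a 5 * a 10)) := by
  simp only [KP, jacobP, p2P, q2P, pdx, pdy, pow_two, map_add, pderiv_mul, pderiv_C, pderiv_X_self,
    pderiv_X_of_ne (by decide : (1 : Fin 2) ≠ 0), pderiv_X_of_ne (by decide : (0 : Fin 2) ≠ 1)]
  simp only [quadForm, map_sub, map_mul, map_ofNat]
  ring

lemma C1P_eq_quadForm (a : Fin 12 → ℝ) : C1P a = quadForm (-a 7) (a 1 - a 8) (a 2) := by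
  simp only [C1P, p1P, q1P, quadForm, map_sub, map_neg]
  ring

def kappaVal (a : Fin 12 → ℝ) : ℝ :=
  transvQuad (coeffMxx a) (coeffMxy a) (coeffMyy a) (4 * (a 3 * a 10 - a 4 * a 9))
    (4 * (a 3 * a 11 - a 5 * a 9)) (4 * (a 4 * a 11 - a 5 * a 10))

def kappa1Val (a : Fin 12 → ℝ) : ℝ :=
  transvQuad (coeffMxx a) (coeffMxy a) (coeffMyy a) (-a 7) (a 1 - a 8) (a 2)

lemma kappaP_eq_C (a : Fin 12 → ℝ) : kappaP a = C (kappaVal a) := by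
  rw [kappaP, MP_eq_quadForm, KP_eq_quadForm, transv2_quadForm, kappaVal]

lemma kappa1P_eq_C (a : Fin 12 → ℝ) : kappa1P a = C (kappa1Val a) := by
  rw [kappa1P, MP_eq_quadForm, C1P_eq_quadForm, transv2_quadForm, kappa1Val]

def kappa1SlopeX (a : Fin 12 → ℝ) : ℝ :=
  transvQuad (coeffMxx a) (coeffMxy a) (coeffMyy a) (-(2 * a 9)) (2 * a 3 - 2 * a 10) (2 * a 4)

def kappa1SlopeY (a : Fin 12 → ℝ) : ℝ :=
  transvQuad (coeffMxx a) (coeffMxy a) (coeffMyy a) (-(2 * a 10)) (2 * a 4 - 2 * a 11) (2 * a 5)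

lemma kappa1Val_rT (a : Fin 12 → ℝ) (α β : ℝ) :
    kappa1Val (rT a α β) = kappa1Val a + α * kappa1SlopeX a + β * kappa1SlopeY a := by
  simp only [kappa1Val, kappa1SlopeX, kappa1SlopeY, transvQuad, coeffMxx, coeffMxy, coeffMyy,
    cc0, cc1, cc2, cc3, rT, Matrix.cons_val, Matrix.cons_val_one, Matrix.cons_val_zero]
  ring

lemma kappa1SlopeX_sq (a : Fin 12 → ℝ) : kappa1SlopeX a ^ 2 =
    (-64 * a 10 ^ 2 + 48 * a 9 * a 11 - 96 * a 4 * a 9 + 64 * a 3 * a 10 - 16 * a 3 ^ 2)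
      * kappaVal a
    + (1024 * a 10 ^ 2 - 1024 * a 9 * a 11 + 2048 * a 4 * a 9 - 2048 * a 3 * a 10) * etaf a := by
  simp only [kappa1SlopeX, kappaVal, etaf, transvQuad, coeffMxx, coeffMxy, coeffMyy,
    cc0, cc1, cc2, cc3]
  ring

lemma kappa1SlopeY_sq (a : Fin 12 → ℝ) : kappa1SlopeY a ^ 2 =
    (-16 * a 11 ^ 2 - 96 * a 5 * a 10 + 64 * a 4 * a 11 - 64 * a 4 ^ 2 + 48 * a 3 * a 5)
      * kappaVal a
    + (2048 * a 5 * a 10 - 2048 * a 4 * a 11 + 1024 * a 4 ^ 2 - 1024 * a 3 * a 5) * etaf a := by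
  simp only [kappa1SlopeY, kappaVal, etaf, transvQuad, coeffMxx, coeffMxy, coeffMyy,
    cc0, cc1, cc2, cc3]
  ring

/-- `κ₁` is a conditional T-comitant modulo `⟨η, κ⟩`: if `η(a) = 0` and
`κ(a) = 0` then `κ₁` is invariant under all translations. -/
theorem kappa1_CT_comitant (a : Fin 12 → ℝ) (h1 : etaf a = 0) (h2 : kappaP a = 0)
    (α β : ℝ) :
    kappa1P (rT a α β) = kappa1P a := by
  have hκ : kappaVal a = 0 := C_injective _ _ (by rw [← kappaP_eq_C, h2, C_0])
  have hX : kappa1SlopeX a = 0 := pow_eq_zero_iff two_ne_zero |>.mp <| by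
    rw [kappa1SlopeX_sq, hκ, h1]; ring
  have hY : kappa1SlopeY a = 0 := pow_eq_zero_iff two_ne_zero |>.mp <| by
    rw [kappa1SlopeY_sq, hκ, h1]; ring
  rw [kappa1P_eq_C, kappa1P_eq_C, kappa1Val_rT, hX, hY, mul_zero, mul_zero, add_zero,
    add_zero]
end QSinf
end
end

section
/- Let a ∈ ℝ^12 satisfy η(a) = 0, κ(a) = 0, L(a,x,y) identically zero, and K1(a,x,y) identically zero. Then for all α, β ∈ ℝ, κ2(r_{α,β}(a)) = κ2(a); that is, κ2 is a conditional T-comitant (invariant under translations) modulo the vanishing of η, κ, L and K1. -/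
open MvPolynomial Finset

noncomputable section

namespace QSinf

/-! `L ≡ 0` forces `D₂ ≡ 0`, i.e. `a20 + b11 = a11 + b02 = 0`. Over `ℝ` the three
coefficients of `L` combine into the sum of squares `((a20 + b11)(a11 + b02) + 5w/2)² + 15w²/4`,
`w = a11·b11 - a20·b02`; once `w = 0` and `(a20 + b11)(a11 + b02) = 0`, every remaining case
reduces to the positive definite form `6u² - 3uv + v²`. Hence `κ₂ = -Jacob(C₀, D₂)` vanishes
whenever `L ≡ 0`, and translations preserve `L` since they leave the quadratic part unchanged. -/

lemma pderiv_two {σ R : Type*} [CommSemiring R] (i : σ) :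
    pderiv i (2 : MvPolynomial σ R) = 0 := by
  rw [← map_ofNat C 2, pderiv_C]

lemma eval_LP (a : Fin 12 → ℝ) (x y : ℝ) : eval ![x, y] (LP a) = Lf a x y := by
  simp only [LP, KP, MP, HP, C2P, p2P, q2P, jacobP, pdx, pdy, Lf, Kf, Hf, Mf, cc0, cc1, cc2, cc3,
    map_add, map_sub, map_neg, map_mul, map_pow, Derivation.leibniz, Derivation.leibniz_pow,
    pderiv_X, pderiv_two, derivation_C, Pi.single_eq_same, Pi.single_eq_of_ne, ne_eq,
    one_ne_zero, zero_ne_one, not_false_eq_true, smul_eq_mul, nsmul_eq_mul, Nat.cast_ofNat,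
    Nat.add_one_sub_one, pow_one, mul_one, mul_zero, add_zero, zero_add,
    eval_ofNat, eval_C, eval_X, Matrix.cons_val_zero, Matrix.cons_val_one, Matrix.cons_val_fin_one]
  ring

lemma Lf_eq_coeffs (a : Fin 12 → ℝ) (x y : ℝ) :
    Lf a x y =
      8 * ((a 3 ^ 2 - 3 * a 3 * a 10 + 6 * a 10 ^ 2 + 5 * a 4 * a 9 - 5 * a 9 * a 11) * x ^ 2
        + (2 * a 3 * a 4 + 2 * a 3 * a 11 - 8 * a 4 * a 10 + 2 * a 10 * a 11 + 10 * a 5 * a 9) * x * y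
        + (6 * a 4 ^ 2 - 3 * a 4 * a 11 + a 11 ^ 2 + 5 * a 5 * a 10 - 5 * a 3 * a 5) * y ^ 2) := by
  simp only [Lf, Kf, Hf, Mf, cc0, cc1, cc2, cc3]
  ring

lemma eq_zero_of_six_sq_sub_mul_add_sq {u v : ℝ} (h : 6 * u ^ 2 - 3 * u * v + v ^ 2 = 0) :
    u = 0 ∧ v = 0 := by
  constructor <;> nlinarith [sq_nonneg (2 * v - 3 * u), sq_nonneg (4 * u - v)]

lemma D2_coeffs_eq_zero_of_L_coeffs {a20 a11 a02 b20 b11 b02 : ℝ}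
    (E1 : a20 ^ 2 - 3 * a20 * b11 + 6 * b11 ^ 2 + 5 * a11 * b20 - 5 * b20 * b02 = 0)
    (E2 : 2 * a20 * a11 + 2 * a20 * b02 - 8 * a11 * b11 + 2 * b11 * b02 + 10 * a02 * b20 = 0)
    (E3 : 6 * a11 ^ 2 - 3 * a11 * b02 + b02 ^ 2 + 5 * a02 * b11 - 5 * a20 * a02 = 0) :
    a20 + b11 = 0 ∧ a11 + b02 = 0 := by
  set w := a11 * b11 - a20 * b02
  have hsos : ((a20 + b11) * (a11 + b02) + 5 / 2 * w) ^ 2 + 15 / 4 * w ^ 2 = 0 := by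
    linear_combination
      ((a11 + b02) ^ 2 + 5 / 2 * (a11 + b02) * (a11 - b02) + 5 / 2 * (a11 - b02) ^ 2) * E1
      - (5 / 2 * (a20 - b11) * (a11 - b02)) * E2 - (5 * b20 * (a11 - b02)) * E3
  have hw : w = 0 := by nlinarith [sq_nonneg ((a20 + b11) * (a11 + b02) + 5 / 2 * w)]
  have hst : (a20 + b11) * (a11 + b02) = 0 := by
    rw [hw] at hsos
    nlinarith [sq_nonneg ((a20 + b11) * (a11 + b02))]
  rcases mul_eq_zero.mp hst with hs | ht
  · refine ⟨hs, ?_⟩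
    have : (a11 + b02) * (a20 - b11) = 0 := by linear_combination (a11 - b02) * hs - 2 * hw
    rcases mul_eq_zero.mp this with ht | hd
    · exact ht
    · obtain ⟨h11, h02⟩ := eq_zero_of_six_sq_sub_mul_add_sq (v := b02) (u := a11)
        (by linear_combination E3 + 5 * a02 * hd)
      rw [h11, h02, add_zero]
  · refine ⟨?_, ht⟩
    have : (a20 + b11) * (a11 - b02) = 0 := by linear_combination 2 * hw + (a20 - b11) * ht
    rcases mul_eq_zero.mp this with hs | hd
    · exact hs
    · obtain ⟨h11, h20⟩ := eq_zero_of_six_sq_sub_mul_add_sq (u := b11) (v := a20)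
        (by linear_combination E1 - 5 * b20 * hd)
      rw [h11, h20, add_zero]

lemma D2_coeffs_eq_zero_of_LP_eq_zero {a : Fin 12 → ℝ} (h : LP a = 0) :
    a 3 + a 10 = 0 ∧ a 4 + a 11 = 0 := by
  have hL (x y : ℝ) : Lf a x y = 0 := by rw [← eval_LP, h, map_zero]
  have h10 := hL 1 0
  have h01 := hL 0 1
  have h11 := hL 1 1
  simp only [Lf_eq_coeffs] at h10 h01 h11
  exact D2_coeffs_eq_zero_of_L_coeffs (a20 := a 3) (a11 := a 4) (a02 := a 5) (b20 := a 9)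
    (b11 := a 10) (b02 := a 11) (by linear_combination h10 / 8)
    (by linear_combination (h11 - h10 - h01) / 8) (by linear_combination h01 / 8)

lemma kappa2f_eq_zero_of_LP_eq_zero {a : Fin 12 → ℝ} (h : LP a = 0) : kappa2f a = 0 := by
  obtain ⟨hs, ht⟩ := D2_coeffs_eq_zero_of_LP_eq_zero h
  unfold kappa2f
  linear_combination 2 * a 0 * hs + 2 * a 6 * ht

lemma LP_rT (a : Fin 12 → ℝ) (α β : ℝ) : LP (rT a α β) = LP a := rfl

theorem kappa2_CT_comitant_general (a : Fin 12 → ℝ) (h3 : LP a = 0) (α β : ℝ) :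
    kappa2f (rT a α β) = kappa2f a := by
  rw [kappa2f_eq_zero_of_LP_eq_zero ((LP_rT a α β).trans h3), kappa2f_eq_zero_of_LP_eq_zero h3]

/-- `κ₂` is a conditional T-comitant modulo `⟨η, κ, L, K₁⟩`: if `η(a) = 0`,
`κ(a) = 0`, `L ≡ 0` and `K₁ ≡ 0` then `κ₂` is invariant under all translations. -/
theorem kappa2_CT_comitant (a : Fin 12 → ℝ) (h1 : etaf a = 0) (h2 : kappaP a = 0)
    (h3 : LP a = 0) (h4 : K1P a = 0) (α β : ℝ) :
    kappa2f (rT a α β) = kappa2f a :=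
  kappa2_CT_comitant_general a h3 α β
end QSinf
end
end
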